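/- arXiv:1109.4798 — 4 statements merged into one kernel-verified Lean document; each statement's English description precedes it below -/
import Mathlib

section
/- Let σ(r) = 4(1 − e^{−r²/4})/r², let k ≥ 1 be an integer, and let β ≥ 1 with β ≥ k (e.g. β = αk/(8π) with α ≥ 8π). Then for all r > 0, k²/r² + β·(1 − σ(r)) ≥ e^{−1}·β^{1/2}. -/
/-!
Split at `r² = 8`. For small `r`, `e^{-x} ≥ (1 - x/2)²` gives `1 - σ(r) ≥ r²/16`, and AM-GM yields
`k²/r² + β r²/16 ≥ k √β / 2 ≥ √β / 2`. For large `r`, `σ(r) ≤ 4/r² ≤ 1/2`, so the second term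
alone is at least `β/2 ≥ √β/2`. Finally `e⁻¹ ≤ 1/2`.
-/

open Real

noncomputable def sigma (r : ℝ) : ℝ := 4 * (1 - exp (-r ^ 2 / 4)) / r ^ 2

lemma sigma_le_one_sub_sq_div_sixteen {r : ℝ} (hr : 0 < r) (hr8 : r ^ 2 ≤ 8) :
    sigma r ≤ 1 - r ^ 2 / 16 := by
  have hexp : (1 - r ^ 2 / 4 / 2) ^ 2 ≤ exp (-r ^ 2 / 4) := by
    rw [neg_div]
    exact one_sub_div_pow_le_exp_neg (n := 2) (by push_cast; linarith)
  rw [sigma, div_le_iff₀ (by positivity)]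
  nlinarith

lemma sigma_le_four_div_sq (r : ℝ) : sigma r ≤ 4 / r ^ 2 := by
  unfold sigma
  gcongr
  linarith [exp_pos (-r ^ 2 / 4)]

lemma sigma_le_half {r : ℝ} (hr8 : 8 ≤ r ^ 2) : sigma r ≤ 1 / 2 :=
  (sigma_le_four_div_sq r).trans <| by
    rw [div_le_iff₀ (by positivity)]
    linarith

lemma mul_sqrt_div_two_le_div_sq_add {k β : ℝ} (hβ : 0 ≤ β) {r : ℝ} (hr : 0 < r) :
    k * √β / 2 ≤ k ^ 2 / r ^ 2 + β * (r ^ 2 / 16) := by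
  have amgm := two_mul_le_add_sq (k / r) (√β * r / 4)
  have hprod : 2 * (k / r) * (√β * r / 4) = k * √β / 2 := by field_simp; ring
  have hsq : (√β * r / 4) ^ 2 = β * (r ^ 2 / 16) := by rw [div_pow, mul_pow, sq_sqrt hβ]; ring
  rwa [hprod, hsq, div_pow] at amgm

lemma inv_exp_one_le_half : (exp 1)⁻¹ ≤ 1 / 2 := by
  rw [inv_le_comm₀ (exp_pos 1) (by norm_num)]
  linarith [exp_one_gt_d9]

theorem stmt_8_general (k : ℕ) (hk : 1 ≤ k) (β : ℝ) (hβ : 1 ≤ β) :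
    ∀ r : ℝ, 0 < r →
      (Real.exp 1)⁻¹ * Real.sqrt β ≤
        (k:ℝ)^2 / r^2 + β * (1 - 4 * (1 - Real.exp (-r^2/4)) / r^2) := by
  intro r hr
  have hβ0 : 0 ≤ β := zero_le_one.trans hβ
  have hk1 : (1 : ℝ) ≤ k := by exact_mod_cast hk
  have key : √β / 2 ≤ k ^ 2 / r ^ 2 + β * (1 - sigma r) := by
    rcases le_or_gt (r ^ 2) 8 with hsmall | hlarge
    · calc √β / 2 ≤ k * √β / 2 := by gcongr; exact le_mul_of_one_le_left (sqrt_nonneg β) hk1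
        _ ≤ k ^ 2 / r ^ 2 + β * (r ^ 2 / 16) := mul_sqrt_div_two_le_div_sq_add hβ0 hr
        _ ≤ k ^ 2 / r ^ 2 + β * (1 - sigma r) := by
          gcongr; linarith [sigma_le_one_sub_sq_div_sixteen hr hsmall]
    · have hsqrt : √β ≤ β := (sqrt_le_left hβ0).2 (by nlinarith)
      calc √β / 2 ≤ β * (1 - 1 / 2) := by linarith
        _ ≤ β * (1 - sigma r) := by gcongr; exact sigma_le_half hlarge.le
        _ ≤ k ^ 2 / r ^ 2 + β * (1 - sigma r) := le_add_of_nonneg_left (by positivity)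
  calc (exp 1)⁻¹ * √β ≤ 1 / 2 * √β := by gcongr; exact inv_exp_one_le_half
    _ = √β / 2 := by ring
    _ ≤ _ := key

theorem stmt_8 (k : ℕ) (hk : 1 ≤ k) (β : ℝ) (hβ : 1 ≤ β) (hkβ : (k:ℝ) ≤ β) :
    ∀ r : ℝ, 0 < r →
      (Real.exp 1)⁻¹ * Real.sqrt β ≤
        (k:ℝ)^2 / r^2 + β * (1 - 4 * (1 - Real.exp (-r^2/4)) / r^2) :=
  stmt_8_general k hk β hβ
end

section
/- For any λ > 1, the function f₂(x; λ) = λ(e^{−x} − 1 + x)/(e^{−λx} − 1 + λx) extends continuously to [0,∞) with f₂(0; λ) = 1/λ, and satisfies f₂(x; λ) < 1 for all x > 0. -/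
/-!
Write `g y = e^{-y} - 1 + y = (e^u - 1 - u)|_{u = -y}`. Since `e^u - 1 - u ~ u^2 / 2` at `0`,
`λ g(x) / g(λx) ~ λ x^2 / (λx)^2 = 1 / λ`. For the bound, strict convexity of `exp` along the
chord from `0` to `-λx` gives `λ (e^{-x} - 1) < e^{-λx} - 1`, which is `λ g(x) < g(λx)`.
-/

open Real Filter Topology Set

lemma abs_exp_sub_quadratic_le {x : ℝ} (hx : |x| ≤ 1) :
    |exp x - (1 + x + x ^ 2 / 2)| ≤ |x| ^ 3 := by
  have h := Real.exp_bound hx (n := 3) (by norm_num)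
  have htaylor : ∑ m ∈ Finset.range 3, x ^ m / (m.factorial : ℝ) = 1 + x + x ^ 2 / 2 := by
    simp [Finset.sum_range_succ, Nat.factorial]
  rw [htaylor] at h
  norm_num [Nat.factorial] at h
  nlinarith [pow_nonneg (abs_nonneg x) 3]

lemma tendsto_exp_sub_one_sub_id_div_sq :
    Tendsto (fun x => (exp x - 1 - x) / x ^ 2) (𝓝[≠] 0) (𝓝 (1 / 2)) := by
  rw [tendsto_iff_norm_sub_tendsto_zero]
  have habs : Tendsto (fun x : ℝ => |x|) (𝓝[≠] 0) (𝓝 0) := by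
    simpa using (continuous_abs.tendsto (0 : ℝ)).mono_left nhdsWithin_le_nhds
  refine squeeze_zero' (Eventually.of_forall fun _ => norm_nonneg _) ?_ habs
  filter_upwards [self_mem_nhdsWithin, habs.eventually (Iic_mem_nhds one_pos)]
    with x (hx : x ≠ 0) (hx1 : |x| ≤ 1)
  have hx2 : 0 < |x| ^ 2 := by positivity
  have hrem : (exp x - 1 - x) / x ^ 2 - 1 / 2 = (exp x - (1 + x + x ^ 2 / 2)) / x ^ 2 := by
    field_simp
    ring
  rw [Real.norm_eq_abs, hrem, abs_div, abs_pow, div_le_iff₀ hx2]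
  calc _ ≤ |x| ^ 3 := abs_exp_sub_quadratic_le hx1
    _ = |x| * |x| ^ 2 := by ring

lemma tendsto_exp_mul_sub_one_sub_mul_div_sq {c : ℝ} (hc : c ≠ 0) :
    Tendsto (fun x => (exp (c * x) - 1 - c * x) / (c * x) ^ 2) (𝓝[≠] 0) (𝓝 (1 / 2)) := by
  refine tendsto_exp_sub_one_sub_id_div_sq.comp
    (tendsto_nhdsWithin_of_tendsto_nhds_of_eventually_within _ ?_ ?_)
  · simpa using ((continuous_const_mul c).tendsto 0).mono_left nhdsWithin_le_nhds
  · filter_upwards [self_mem_nhdsWithin] with x (hx : x ≠ 0)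
    exact mul_ne_zero hc hx

lemma StrictConvexOn.mul_sub_lt_sub_of_one_lt {s : Set ℝ} {f : ℝ → ℝ}
    (hf : StrictConvexOn ℝ s f) (h0 : 0 ∈ s) {x lam : ℝ} (hlx : lam * x ∈ s) (hx : x ≠ 0)
    (hlam : 1 < lam) :
    lam * (f x - f 0) < f (lam * x) - f 0 := by
  have hlam0 : 0 < lam := by linarith
  -- `x` is the convex combination `(1 / lam) • (lam * x) + (1 - 1 / lam) • 0`
  have h := hf.2 hlx h0 (mul_ne_zero hlam0.ne' hx) (one_div_pos.2 hlam0)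
    (sub_pos.2 ((div_lt_one hlam0).2 hlam)) (add_sub_cancel _ _)
  simp only [smul_eq_mul, mul_zero, add_zero] at h
  field_simp at h
  linarith

lemma exp_neg_sub_one_add_pos {y : ℝ} (hy : y ≠ 0) : 0 < exp (-y) - 1 + y := by
  linarith [add_one_lt_exp (neg_ne_zero.2 hy)]

lemma tendsto_ratio_exp_neg_sub_one_add {lam : ℝ} (hlam : lam ≠ 0) :
    Tendsto (fun x => lam * (exp (-x) - 1 + x) / (exp (-lam * x) - 1 + lam * x))
      (𝓝[≠] 0) (𝓝 (1 / lam)) := by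
  have h := (tendsto_exp_mul_sub_one_sub_mul_div_sq (neg_ne_zero.2 one_ne_zero)).div
    ((tendsto_exp_mul_sub_one_sub_mul_div_sq (neg_ne_zero.2 hlam)).const_mul lam) (by simpa)
  rw [show (1 / 2 : ℝ) / (lam * (1 / 2)) = 1 / lam by field_simp] at h
  refine h.congr' ?_
  filter_upwards [self_mem_nhdsWithin] with x (hx : x ≠ 0)
  simp only [Pi.div_apply]
  field_simp
  ring

theorem stmt_16 (lam : ℝ) (hlam : 1 < lam) :
    ContinuousOn
      (fun x : ℝ => lam * (Real.exp (-x) - 1 + x) / (Real.exp (-lam * x) - 1 + lam * x))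
      (Set.Ioi 0) ∧
    Filter.Tendsto
      (fun x : ℝ => lam * (Real.exp (-x) - 1 + x) / (Real.exp (-lam * x) - 1 + lam * x))
      (nhdsWithin 0 (Set.Ioi 0)) (nhds (1 / lam)) ∧
    ∀ x : ℝ, 0 < x →
      lam * (Real.exp (-x) - 1 + x) / (Real.exp (-lam * x) - 1 + lam * x) < 1 := by
  have hlam0 : 0 < lam := zero_lt_one.trans hlam
  have hden : ∀ x : ℝ, 0 < x → 0 < exp (-lam * x) - 1 + lam * x := fun x hx => by
    simpa only [neg_mul] using exp_neg_sub_one_add_pos (mul_pos hlam0 hx).ne'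
  refine ⟨?_, (tendsto_ratio_exp_neg_sub_one_add hlam0.ne').mono_left (nhdsGT_le_nhdsNE 0),
    fun x hx => ?_⟩
  · exact ContinuousOn.div (by fun_prop) (by fun_prop) fun x hx => (hden x hx).ne'
  · rw [div_lt_one (hden x hx), neg_mul]
    have := strictConvexOn_exp.mul_sub_lt_sub_of_one_lt (mem_univ 0) (mem_univ (lam * -x))
      (neg_ne_zero.2 hx.ne') hlam
    rw [exp_zero, mul_neg] at this
    linarith
end

section
/- Fix c₀ > 0 and ε₁ ∈ (0,1). There exists c ∈ (0,1) such that for all r ≥ ε₁ e^{c₀/2}, σ(r e^{c₀/2}) ≤ (1 − c)·σ(r), where σ(r) = 4(1 − e^{−r²/4})/r². -/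
/-!
With `λ = e^{c₀}` and `θ = e^{-r²/4}` one has `σ(r e^{c₀/2}) = f₁(θ; λ) σ(r)`, where
`f₁(θ; λ) = (1 - θ^λ) / (λ (1 - θ))` is the slope of the chord of the convex map `t ↦ t^λ`
from `θ` to `1`, divided by `λ`. Convexity makes `f₁` increasing in `θ`, and the strict Bernoulli
inequality makes it `< 1`. The constraint `r ≥ ε₁ e^{c₀/2}` keeps `θ` below
`θ₀ = e^{-ε₁² λ / 4} < 1`, so the ratio is at most `f₁(θ₀; λ) < 1`.
-/

open Real Set

noncomputable def σ (r : ℝ) : ℝ := 4 * (1 - exp (-r ^ 2 / 4)) / r ^ 2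

/-- The paper's `f₁(θ; p)`. -/
noncomputable def rpowSecantRatio (p θ : ℝ) : ℝ := (1 - θ ^ p) / (p * (1 - θ))

lemma rpowSecantRatio_eq_slope_div (p θ : ℝ) :
    rpowSecantRatio p θ = (θ ^ p - 1) / (θ - 1) / p := by
  rw [rpowSecantRatio, div_div, ← neg_div_neg_eq, mul_comm]
  ring_nf

lemma rpowSecantRatio_pos {p θ : ℝ} (hp : 0 < p) (hθ : θ ∈ Ico 0 1) :
    0 < rpowSecantRatio p θ :=
  div_pos (sub_pos.2 (rpow_lt_one hθ.1 hθ.2 hp)) (mul_pos hp (sub_pos.2 hθ.2))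

lemma rpowSecantRatio_lt_one {p θ : ℝ} (hp : 1 < p) (hθ : θ ∈ Ico 0 1) :
    rpowSecantRatio p θ < 1 := by
  have bernoulli : 1 + p * (θ - 1) < θ ^ p := by
    simpa using one_add_mul_self_lt_rpow_one_add (s := θ - 1) (by linarith [hθ.1])
      (sub_ne_zero.2 hθ.2.ne) hp
  rw [rpowSecantRatio, div_lt_one (mul_pos (by linarith) (sub_pos.2 hθ.2))]
  linarith

lemma rpowSecantRatio_monotoneOn {p : ℝ} (hp : 1 ≤ p) :
    MonotoneOn (rpowSecantRatio p) (Ico 0 1) := by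
  intro θ hθ θ' hθ' hle
  have slope_mono := (convexOn_rpow hp).secant_mono (a := 1) (mem_Ici.2 zero_le_one)
    (mem_Ici.2 hθ.1) (mem_Ici.2 hθ'.1) hθ.2.ne hθ'.2.ne hle
  rw [one_rpow] at slope_mono
  rw [rpowSecantRatio_eq_slope_div, rpowSecantRatio_eq_slope_div]
  exact div_le_div_of_nonneg_right slope_mono (by linarith)

lemma exp_neg_sq_div_four_mem_Ico {x : ℝ} (hx : x ≠ 0) : exp (-x ^ 2 / 4) ∈ Ico 0 1 :=
  ⟨(exp_pos _).le,
    exp_lt_one_iff.2 (div_neg_of_neg_of_pos (neg_lt_zero.2 (by positivity)) four_pos)⟩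

lemma σ_nonneg (r : ℝ) : 0 ≤ σ r :=
  div_nonneg (mul_nonneg zero_le_four (sub_nonneg.2 (exp_le_one_iff.2
    (div_nonpos_of_nonpos_of_nonneg (neg_nonpos.2 (sq_nonneg r)) zero_le_four)))) (sq_nonneg r)

lemma σ_mul {r μ : ℝ} (hr : r ≠ 0) :
    σ (r * μ) = rpowSecantRatio (μ ^ 2) (exp (-r ^ 2 / 4)) * σ r := by
  have hθ : 1 - exp (-r ^ 2 / 4) ≠ 0 := sub_ne_zero.2 (exp_neg_sq_div_four_mem_Ico hr).2.ne'
  have hpow : exp (-(r * μ) ^ 2 / 4) = exp (-r ^ 2 / 4) ^ (μ ^ 2) := by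
    rw [← exp_mul]; ring_nf
  rw [σ, σ, rpowSecantRatio, hpow]
  generalize exp (-r ^ 2 / 4) = θ at hθ ⊢
  field_simp

theorem stmt_17 (c₀ ε₁ : ℝ) (hc₀ : 0 < c₀) (hε₁ : ε₁ ∈ Set.Ioo (0:ℝ) 1) :
    ∃ c ∈ Set.Ioo (0:ℝ) 1, ∀ r : ℝ, ε₁ * Real.exp (c₀/2) ≤ r →
      4 * (1 - Real.exp (-(r * Real.exp (c₀/2))^2/4)) / (r * Real.exp (c₀/2))^2
        ≤ (1 - c) * (4 * (1 - Real.exp (-r^2/4)) / r^2) := by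
  have hsq : exp (c₀ / 2) ^ 2 = exp c₀ := by rw [← exp_nat_mul]; ring_nf
  have hexp : 1 < exp c₀ := one_lt_exp_iff.2 hc₀
  set θ₀ := exp (-(ε₁ * exp (c₀ / 2)) ^ 2 / 4)
  have hθ₀ : θ₀ ∈ Ico 0 1 := exp_neg_sq_div_four_mem_Ico (mul_pos hε₁.1 (exp_pos _)).ne'
  refine ⟨1 - rpowSecantRatio (exp c₀) θ₀, ⟨?_, ?_⟩, fun r hr => ?_⟩
  · linarith [rpowSecantRatio_lt_one hexp hθ₀]
  · linarith [rpowSecantRatio_pos (zero_lt_one.trans hexp) hθ₀]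
  have hr0 : 0 < r := lt_of_lt_of_le (mul_pos hε₁.1 (exp_pos _)) hr
  have hθ := exp_neg_sq_div_four_mem_Ico hr0.ne'
  have hθθ₀ : exp (-r ^ 2 / 4) ≤ θ₀ :=
    exp_le_exp.2 (by gcongr; exact mul_nonneg hε₁.1.le (exp_pos _).le)
  change σ (r * exp (c₀ / 2)) ≤ _ * σ r
  rw [sub_sub_cancel, σ_mul hr0.ne', hsq]
  exact mul_le_mul_of_nonneg_right
    (rpowSecantRatio_monotoneOn hexp.le hθ hθ₀ hθθ₀) (σ_nonneg r)
end

section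
/- Fix c₀ > 0 and ε₁ ∈ (0,1). There exists c₃ ∈ (0,1) such that for all 0 < r < ε₁, one has 1 − σ(r) ≤ (1 − c₃)·(1 − σ(r e^{c₀/2})), where σ(r) = 4(1 − e^{−r²/4})/r². -/
/-!
With `x = r²/4` and `g t = e⁻ᵗ - 1 + t` one has `1 - σ(r) = g x / x`, and `r e^{c₀/2}` corresponds to
`λ x` with `λ = e^{c₀}`. So it suffices to find `c > 0` with `(1 + c) λ g(x) ≤ g(λx)` for
`0 ≤ x ≤ ε₁²/4`, and then `c₃ = c / (1 + c)`. Both sides vanish at `0`, and comparing derivatives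
reduces this to `c (1 - e⁻ᵘ) ≤ e⁻ᵘ - e^{-λu}`, which holds with `c = (λ - 1) e^{-λa}` on `[0, a]`
because `1 - e⁻ᵘ ≤ u` while `e⁻ᵘ - e^{-λu} ≥ (λ - 1) u e^{-λu}`.
-/

open Real Set

lemma mul_one_sub_exp_neg_le_exp_neg_sub_exp_neg_mul {l a u : ℝ} (hl : 1 ≤ l)
    (hu₀ : 0 ≤ u) (hua : u ≤ a) :
    (l - 1) * exp (-(l * a)) * (1 - exp (-u)) ≤ exp (-u) - exp (-(l * u)) := by
  have hlu : 0 ≤ (l - 1) * u := mul_nonneg (by linarith) hu₀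
  have h_one_sub : 1 - exp (-u) ≤ u := by linarith [add_one_le_exp (-u)]
  have h_exp_mono : exp (-(l * a)) ≤ exp (-(l * u)) :=
    exp_le_exp.mpr (by nlinarith)
  calc (l - 1) * exp (-(l * a)) * (1 - exp (-u))
      ≤ (l - 1) * exp (-(l * a)) * u :=
        mul_le_mul_of_nonneg_left h_one_sub (mul_nonneg (by linarith) (exp_nonneg _))
    _ = exp (-(l * a)) * ((l - 1) * u) := by ring
    _ ≤ exp (-(l * u)) * (exp ((l - 1) * u) - 1) :=
        mul_le_mul h_exp_mono (by linarith [add_one_le_exp ((l - 1) * u)]) hlu (exp_nonneg _)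
    _ = exp (-u) - exp (-(l * u)) := by
        rw [mul_sub, ← exp_add]; ring_nf

lemma one_add_mul_exp_neg_sub_one_add_le {l a x : ℝ} (hl : 1 ≤ l) (hx₀ : 0 ≤ x) (hxa : x ≤ a) :
    (1 + (l - 1) * exp (-(l * a))) * l * (exp (-x) - 1 + x) ≤ exp (-(l * x)) - 1 + l * x := by
  set c := (l - 1) * exp (-(l * a))
  let F : ℝ → ℝ := fun t ↦ exp (-(l * t)) - 1 + l * t - (1 + c) * l * (exp (-t) - 1 + t)
  have hF : ∀ t, HasDerivAt F (l * ((exp (-t) - exp (-(l * t))) - c * (1 - exp (-t)))) t := by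
    intro t
    have h_neg : HasDerivAt (fun t ↦ exp (-t)) (-exp (-t)) t := by
      simpa using (hasDerivAt_neg t).exp
    have h_neg_mul : HasDerivAt (fun t ↦ exp (-(l * t))) (-l * exp (-(l * t))) t := by
      simpa [mul_comm] using ((hasDerivAt_id t).const_mul l).neg.exp
    exact (((h_neg_mul.sub_const 1).add ((hasDerivAt_id t).const_mul l)).sub
      (((h_neg.sub_const 1).add (hasDerivAt_id t)).const_mul ((1 + c) * l))).congr_deriv (by ring)
  have hF_mono : MonotoneOn F (Icc 0 a) := by
    refine monotoneOn_of_hasDerivWithinAt_nonneg (convex_Icc 0 a)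
      (fun t _ ↦ (hF t).continuousAt.continuousWithinAt) (fun t _ ↦ (hF t).hasDerivWithinAt) ?_
    intro t ht
    rw [interior_Icc] at ht
    exact mul_nonneg (by linarith) (sub_nonneg.mpr
      (mul_one_sub_exp_neg_le_exp_neg_sub_exp_neg_mul hl ht.1.le ht.2.le))
  have := hF_mono ⟨le_rfl, hx₀.trans hxa⟩ ⟨hx₀, hxa⟩ hx₀
  simp only [F, mul_zero, neg_zero, exp_zero, add_zero, sub_self] at this
  linarith

lemma one_sub_four_mul_one_sub_exp_div {q : ℝ} (hq : q ≠ 0) :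
    1 - 4 * (1 - exp (-q / 4)) / q = (exp (-(q / 4)) - 1 + q / 4) / (q / 4) := by
  rw [neg_div]
  field_simp
  ring

theorem stmt_18_general (c₀ ε₁ : ℝ) (hc₀ : 0 < c₀) :
    ∃ c₃ ∈ Set.Ioo (0:ℝ) 1, ∀ r : ℝ, 0 < r → r < ε₁ →
      1 - 4 * (1 - Real.exp (-r^2/4)) / r^2
        ≤ (1 - c₃) *
          (1 - 4 * (1 - Real.exp (-(r * Real.exp (c₀/2))^2/4)) / (r * Real.exp (c₀/2))^2) := by
  set l := exp c₀
  have hl : 1 < l := one_lt_exp_iff.mpr hc₀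
  set c := (l - 1) * exp (-(l * (ε₁ ^ 2 / 4)))
  have hc : 0 < c := mul_pos (by linarith) (exp_pos _)
  refine ⟨c / (1 + c), ⟨by positivity, (div_lt_one (by linarith)).mpr (by linarith)⟩, ?_⟩
  intro r hr hrε
  have hr_sq : (r * exp (c₀ / 2)) ^ 2 = l * r ^ 2 := by
    rw [mul_pow, ← exp_nat_mul, Nat.cast_ofNat, mul_div_cancel₀ _ two_ne_zero, mul_comm]
  set x := r ^ 2 / 4 with hx
  have hx₀ : 0 < x := by positivity
  have hxε : x ≤ ε₁ ^ 2 / 4 := by rw [hx]; gcongr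
  have hkey := one_add_mul_exp_neg_sub_one_add_le hl.le hx₀.le hxε
  rw [hr_sq, one_sub_four_mul_one_sub_exp_div (by positivity),
    one_sub_four_mul_one_sub_exp_div (by positivity), ← hx,
    show l * r ^ 2 / 4 = l * x by rw [hx]; ring, one_sub_div (by positivity : 1 + c ≠ 0),
    add_sub_cancel_right, div_mul_div_comm, div_le_div_iff₀ hx₀ (by positivity)]
  linear_combination x * hkey

theorem stmt_18 (c₀ ε₁ : ℝ) (hc₀ : 0 < c₀) (hε₁ : ε₁ ∈ Set.Ioo (0:ℝ) 1) :
    ∃ c₃ ∈ Set.Ioo (0:ℝ) 1, ∀ r : ℝ, 0 < r → r < ε₁ →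
      1 - 4 * (1 - Real.exp (-r^2/4)) / r^2
        ≤ (1 - c₃) *
          (1 - 4 * (1 - Real.exp (-(r * Real.exp (c₀/2))^2/4)) / (r * Real.exp (c₀/2))^2) :=
  stmt_18_general c₀ ε₁ hc₀
end
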